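/- Liouville-type theorem: let (f_ε) be a net of entire functions f_ε : ℂ → ℂ and M = [M_ε] ∈ ℝ~ with M > 0 such that for every N ∈ ℕ one has sup{|f_ε(w)| : |w| ≤ ρ_ε^(−N)} ≤ M_ε for ε small. Put a_{nε} := f_ε^(n)(0)/n!. Then (a_{nε})_{n,ε} is weakly ρ-moderate with class (a_n)_c ∈ ℂ~_c, a_N := [a_{N_ε,ε}] = 0 in ℂ~ for every N ∈ ℕ~ with N ≥ 1, and for every z ∈ σ((a_n)_c, 0) the hyperseries Σ_{n∈ℕ~} a_n z^n converges to the constant [f_ε(0)] ∈ ℂ~. In particular, a bounded generalized entire function, i.e. f : ℂ~ → ℂ~ with f(z) = Σ_{n∈ℕ~} a_n z^n for all z ∈ ℂ~ where σ((a_n)_c, 0) = ℂ~, is constant. -/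

import Mathlib

/-!
Cauchy's estimates on the discs `|w| ≤ dρ^(-P)` bound the Taylor coefficients of a net bounded
by `M_ε ≤ dρ^(-R₀)` by `|a_{nε}| ≤ dρ^(-R₀) dρ^(P n)`, for every `P`. This bound gives weak
moderateness and negligibility of `a_N` for `N ≥ 1`, and for moderate `z` it makes every partial
hypersum of `Σ a_n z^n` differ from `a_0` negligibly, uniformly in the upper index.

For a bounded `F = Σ a_n z^n` with `σ((a_n)_c, 0) = ℂ~` the same bound comes from Cauchy's
estimate on the circle `|w| = dρ^(-N)`: the maximum of `|Σ a_{nε} w^n|` there is attained at a net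
`t_ε`, and `Σ a_{nε} t_ε^n` represents `F([t_ε])`, which is bounded. This last point is where the
conditions defining `σ` enter: (iii) identifies `F` with the pointwise sum at one representative,
and (iv), through the mean value theorem, shows that changing the representative changes the
pointwise sum negligibly.
-/

open Filter

noncomputable section

/-- `P ε` holds for all ε small. -/
def EvS (P : ℝ → Prop) : Prop := ∃ ε₀ : ℝ, 0 < ε₀ ∧ ε₀ ≤ 1 ∧ ∀ ε : ℝ, 0 < ε → ε ≤ ε₀ → P ε

theorem EvS.mono {P Q : ℝ → Prop} (h : EvS P) (h2 : ∀ ε, 0 < ε → ε ≤ 1 → P ε → Q ε) : EvS Q := by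
  obtain ⟨e, he, he1, hP⟩ := h
  exact ⟨e, he, he1, fun ε hε hεe => h2 ε hε (hεe.trans he1) (hP ε hε hεe)⟩

theorem EvS.and {P Q : ℝ → Prop} (h : EvS P) (h' : EvS Q) : EvS fun ε => P ε ∧ Q ε := by
  obtain ⟨e, he, he1, hP⟩ := h
  obtain ⟨e', he', he1', hQ⟩ := h'
  exact ⟨min e e', lt_min he he', le_trans (min_le_left _ _) he1, fun ε hε hm =>
    ⟨hP ε hε (le_trans hm (min_le_left _ _)), hQ ε hε (le_trans hm (min_le_right _ _))⟩⟩

/-- A gauge: a nonincreasing net of reals in (0,1] tending to 0. -/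
structure Gauge where
  ρ : ℝ → ℝ
  pos : ∀ ε : ℝ, 0 < ε → ε ≤ 1 → 0 < ρ ε
  le_one : ∀ ε : ℝ, 0 < ε → ε ≤ 1 → ρ ε ≤ 1
  anti : ∀ ε ε' : ℝ, 0 < ε → ε ≤ ε' → ε' ≤ 1 → ρ ε' ≤ ρ ε
  to_zero : Tendsto ρ (nhdsWithin 0 (Set.Ioi 0)) (nhds 0)

namespace Gauge

theorem evs_le (g : Gauge) {δ : ℝ} (hδ : 0 < δ) : EvS fun ε => g.ρ ε ≤ δ := by
  have h := g.to_zero.eventually_lt_const hδ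
  rw [eventually_nhdsWithin_iff, Metric.eventually_nhds_iff] at h
  obtain ⟨e, he, hP⟩ := h
  refine ⟨min (e / 2) 1, by positivity, min_le_right _ _, fun ε hε hεe => ?_⟩
  have hd : dist ε 0 < e := by
    rw [Real.dist_eq, sub_zero, abs_of_pos hε]
    have h1 : ε ≤ e / 2 := le_trans hεe (min_le_left _ _)
    linarith
  exact (hP hd (Set.mem_Ioi.mpr hε)).le

variable {𝕜 : Type} [RCLike 𝕜]

/-- ρ-moderate nets. -/
def Mod (g : Gauge) (x : ℝ → 𝕜) : Prop := ∃ N : ℕ, EvS fun ε => ‖x ε‖ ≤ g.ρ ε ^ (-(N : ℤ))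

/-- ρ-negligible nets. -/
def Negl (g : Gauge) (x : ℝ → 𝕜) : Prop := ∀ q : ℕ, EvS fun ε => ‖x ε‖ ≤ g.ρ ε ^ q

theorem Negl.mod {g : Gauge} {x : ℝ → 𝕜} (h : g.Negl x) : g.Mod x := by
  refine ⟨0, (h 0).mono fun ε hε hε1 hx => ?_⟩
  simpa using hx

theorem negl_sub_self (g : Gauge) (x : ℝ → 𝕜) : g.Negl fun ε => x ε - x ε := fun q =>
  ⟨1, one_pos, le_refl 1, fun ε hε hε1 => by
    simp only [sub_self, norm_zero]
    exact pow_nonneg (g.pos ε hε hε1).le q⟩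

theorem negl_of_evs_eq (g : Gauge) {x y : ℝ → 𝕜} (h : EvS fun ε => x ε = y ε) :
    g.Negl fun ε => x ε - y ε := fun q => h.mono fun ε hε hε1 he => by
  show ‖x ε - y ε‖ ≤ _
  rw [he, sub_self, norm_zero]; exact pow_nonneg (g.pos ε hε hε1).le q

theorem Negl.symm_sub {g : Gauge} {x y : ℝ → 𝕜} (h : g.Negl fun ε => x ε - y ε) :
    g.Negl fun ε => y ε - x ε := fun q => (h q).mono fun ε _ _ hx => by rwa [norm_sub_rev]

theorem Negl.add {g : Gauge} {x y : ℝ → 𝕜} (hx : g.Negl x) (hy : g.Negl y) :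
    g.Negl fun ε => x ε + y ε := by
  intro q
  refine (((hx (q+1)).and (hy (q+1))).and (g.evs_le (by norm_num : (0:ℝ) < 1/2))).mono
    fun ε hε hε1 h => ?_
  obtain ⟨⟨h1, h2⟩, h3⟩ := h
  have hρ := g.pos ε hε hε1
  calc ‖x ε + y ε‖ ≤ ‖x ε‖ + ‖y ε‖ := norm_add_le _ _
    _ ≤ g.ρ ε ^ (q+1) + g.ρ ε ^ (q+1) := add_le_add h1 h2
    _ = 2 * g.ρ ε * g.ρ ε ^ q := by ring
    _ ≤ 1 * g.ρ ε ^ q := by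
        apply mul_le_mul_of_nonneg_right _ (pow_nonneg hρ.le q)
        linarith
    _ = g.ρ ε ^ q := one_mul _

theorem Negl.neg {g : Gauge} {y : ℝ → 𝕜} (hy : g.Negl y) : g.Negl fun ε => -(y ε) :=
  fun q => (hy q).mono fun ε _ _ h => by
    show ‖-(y ε)‖ ≤ _
    rwa [norm_neg]

theorem Negl.sub {g : Gauge} {x y : ℝ → 𝕜} (hx : g.Negl x) (hy : g.Negl y) :
    g.Negl fun ε => x ε - y ε := by
  have h := hx.add hy.neg
  have heq : (fun ε => x ε + -(y ε)) = fun ε => x ε - y ε := by funext ε; ring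
  rwa [heq] at h

theorem Negl.triangle {g : Gauge} {x y z : ℝ → 𝕜} (h1 : g.Negl fun ε => x ε - y ε)
    (h2 : g.Negl fun ε => y ε - z ε) : g.Negl fun ε => x ε - z ε := by
  have h := h1.add h2
  have heq : (fun ε => (x ε - y ε) + (y ε - z ε)) = fun ε => x ε - z ε := by
    funext ε; ring
  rwa [heq] at h

end Gauge

namespace Gauge

variable {𝕜 : Type} [RCLike 𝕜]

theorem zpow_neg_le (g : Gauge) {ε : ℝ} (hε : 0 < ε) (hε1 : ε ≤ 1) {a b : ℕ} (h : a ≤ b) :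
    g.ρ ε ^ (-(a:ℤ)) ≤ g.ρ ε ^ (-(b:ℤ)) := by
  apply zpow_le_zpow_right_of_le_one₀ (g.pos ε hε hε1) (g.le_one ε hε hε1)
  omega

theorem Mod.of_norm_le {g : Gauge} {x : ℝ → 𝕜} {y : ℝ → ℝ} (hy : g.Mod y)
    (h : ∀ ε, 0 < ε → ε ≤ 1 → ‖x ε‖ ≤ |y ε|) : g.Mod x := by
  obtain ⟨N, hN⟩ := hy
  exact ⟨N, hN.mono fun ε hε hε1 hb => le_trans (h ε hε hε1) (by rwa [Real.norm_eq_abs] at hb)⟩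

theorem Mod.add {g : Gauge} {x y : ℝ → 𝕜} (hx : g.Mod x) (hy : g.Mod y) :
    g.Mod fun ε => x ε + y ε := by
  obtain ⟨N, hN⟩ := hx; obtain ⟨M, hM⟩ := hy
  refine ⟨N + M + 1, ((hN.and hM).and (g.evs_le (by norm_num : (0:ℝ) < 1/2))).mono
    fun ε hε hε1 h => ?_⟩
  obtain ⟨⟨h1, h2⟩, h3⟩ := h
  have hρ := g.pos ε hε hε1
  have e1 : g.ρ ε ^ (-(N:ℤ)) ≤ g.ρ ε ^ (-((N+M:ℕ):ℤ)) := g.zpow_neg_le hε hε1 (by omega)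
  have e2 : g.ρ ε ^ (-(M:ℤ)) ≤ g.ρ ε ^ (-((N+M:ℕ):ℤ)) := g.zpow_neg_le hε hε1 (by omega)
  have key : g.ρ ε ^ (-((N+M:ℕ):ℤ)) = g.ρ ε ^ (-((N+M+1:ℕ):ℤ)) * g.ρ ε := by
    rw [← zpow_add_one₀ hρ.ne']
    congr 1
    push_cast
    ring
  have hpos : (0:ℝ) < g.ρ ε ^ (-((N+M+1:ℕ):ℤ)) := zpow_pos hρ _
  calc ‖x ε + y ε‖ ≤ ‖x ε‖ + ‖y ε‖ := norm_add_le _ _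
    _ ≤ g.ρ ε ^ (-((N+M:ℕ):ℤ)) + g.ρ ε ^ (-((N+M:ℕ):ℤ)) := add_le_add (h1.trans e1) (h2.trans e2)
    _ = 2 * g.ρ ε * g.ρ ε ^ (-((N+M+1:ℕ):ℤ)) := by rw [key]; ring
    _ ≤ 1 * g.ρ ε ^ (-((N+M+1:ℕ):ℤ)) := by
        apply mul_le_mul_of_nonneg_right _ hpos.le
        linarith
    _ = g.ρ ε ^ (-((N+M+1:ℕ):ℤ)) := one_mul _

theorem Mod.neg {g : Gauge} {x : ℝ → 𝕜} (hx : g.Mod x) : g.Mod fun ε => -(x ε) := by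
  obtain ⟨N, hN⟩ := hx
  exact ⟨N, hN.mono fun ε _ _ h => by rwa [norm_neg]⟩

theorem Mod.sub {g : Gauge} {x y : ℝ → 𝕜} (hx : g.Mod x) (hy : g.Mod y) :
    g.Mod fun ε => x ε - y ε := by
  have h := hx.add hy.neg
  have heq : (fun ε => x ε + -(y ε)) = fun ε => x ε - y ε := by funext ε; ring
  rwa [heq] at h

theorem Mod.mul {g : Gauge} {x y : ℝ → 𝕜} (hx : g.Mod x) (hy : g.Mod y) :
    g.Mod fun ε => x ε * y ε := by
  obtain ⟨N, hN⟩ := hx; obtain ⟨M, hM⟩ := hy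
  refine ⟨N + M, (hN.and hM).mono fun ε hε hε1 h => ?_⟩
  obtain ⟨h1, h2⟩ := h
  have hρ := g.pos ε hε hε1
  calc ‖x ε * y ε‖ = ‖x ε‖ * ‖y ε‖ := norm_mul _ _
    _ ≤ g.ρ ε ^ (-(N:ℤ)) * g.ρ ε ^ (-(M:ℤ)) :=
        mul_le_mul h1 h2 (norm_nonneg _) (zpow_nonneg hρ.le _)
    _ = g.ρ ε ^ (-((N+M:ℕ):ℤ)) := by rw [← zpow_add₀ hρ.ne']; congr 1; push_cast; ring

theorem Mod.norm {g : Gauge} {x : ℝ → 𝕜} (hx : g.Mod x) : g.Mod fun ε => ‖x ε‖ := by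
  obtain ⟨N, hN⟩ := hx
  exact ⟨N, hN.mono fun ε _ _ h => by rwa [norm_norm]⟩

theorem Negl.mul_mod {g : Gauge} {x y : ℝ → 𝕜} (hx : g.Negl x) (hy : g.Mod y) :
    g.Negl fun ε => x ε * y ε := by
  obtain ⟨M, hM⟩ := hy
  intro q
  refine ((hx (q + M)).and hM).mono fun ε hε hε1 h => ?_
  obtain ⟨h1, h2⟩ := h
  have hρ := g.pos ε hε hε1
  calc ‖x ε * y ε‖ = ‖x ε‖ * ‖y ε‖ := norm_mul _ _
    _ ≤ g.ρ ε ^ (q+M) * g.ρ ε ^ (-(M:ℤ)) :=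
        mul_le_mul h1 h2 (norm_nonneg _) (pow_nonneg hρ.le _)
    _ = g.ρ ε ^ q := by
        rw [← zpow_natCast (g.ρ ε) (q+M), ← zpow_add₀ hρ.ne', ← zpow_natCast (g.ρ ε) q]
        congr 1; push_cast; ring

theorem mod_const (g : Gauge) (c : 𝕜) (hc : ‖c‖ ≤ 1) : g.Mod fun _ => c := by
  refine ⟨0, 1, one_pos, le_refl 1, fun ε hε hε1 => ?_⟩
  simpa using hc

theorem mod_pow (g : Gauge) (q : ℕ) : g.Mod fun ε => g.ρ ε ^ q := by
  refine ⟨0, 1, one_pos, le_refl 1, fun ε hε hε1 => ?_⟩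
  have hρ := g.pos ε hε hε1
  show ‖g.ρ ε ^ q‖ ≤ _
  rw [Real.norm_eq_abs, abs_of_nonneg (pow_nonneg hρ.le q)]
  simpa using pow_le_one₀ hρ.le (g.le_one ε hε hε1)

theorem mod_zpow_neg (g : Gauge) (q : ℕ) : g.Mod fun ε => g.ρ ε ^ (-(q:ℤ)) := by
  refine ⟨q, 1, one_pos, le_refl 1, fun ε hε hε1 => ?_⟩
  have hρ := g.pos ε hε hε1
  show ‖g.ρ ε ^ (-(q:ℤ))‖ ≤ _
  rw [Real.norm_eq_abs, abs_of_nonneg (zpow_nonneg hρ.le _)]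

/-- Hypernatural moderateness. -/
def NMod (g : Gauge) (n : ℝ → ℕ) : Prop := g.Mod fun ε => (n ε : ℝ)

end Gauge

instance gSetoid (g : Gauge) (𝕜 : Type) [RCLike 𝕜] : Setoid {x : ℝ → 𝕜 // g.Mod x} where
  r a b := g.Negl fun ε => a.1 ε - b.1 ε
  iseqv := ⟨fun a => g.negl_sub_self a.1, fun h => h.symm_sub, fun h h' => h.triangle h'⟩

instance natSetoid (g : Gauge) : Setoid {n : ℝ → ℕ // g.NMod n} where
  r a b := g.Negl fun ε => (a.1 ε : ℝ) - (b.1 ε : ℝ)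
  iseqv := ⟨fun a => g.negl_sub_self _, fun h => h.symm_sub, fun h h' => h.triangle h'⟩

/-- The ring of Robinson-Colombeau generalized numbers (ℂ~ for 𝕜 = ℂ, ℝ~ for 𝕜 = ℝ). -/
abbrev GQ (g : Gauge) (𝕜 : Type) [RCLike 𝕜] := Quotient (gSetoid g 𝕜)

abbrev Ct (g : Gauge) := GQ g ℂ
abbrev Rt (g : Gauge) := GQ g ℝ

/-- The set of hypernatural numbers ℕ~. -/
abbrev Nt (g : Gauge) := Quotient (natSetoid g)

def GQ.mk (g : Gauge) {𝕜 : Type} [RCLike 𝕜] (x : ℝ → 𝕜) (h : g.Mod x) : GQ g 𝕜 :=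
  Quotient.mk (gSetoid g 𝕜) ⟨x, h⟩

/-- `x` is a representative of the generalized number `z`. -/
def IsRep (g : Gauge) {𝕜 : Type} [RCLike 𝕜] (x : ℝ → 𝕜) (z : GQ g 𝕜) : Prop :=
  ∃ h : g.Mod x, GQ.mk g x h = z

def Nt.mk (g : Gauge) (n : ℝ → ℕ) (h : g.NMod n) : Nt g := Quotient.mk (natSetoid g) ⟨n, h⟩

def Nt.IsRep (g : Gauge) (n : ℝ → ℕ) (m : Nt g) : Prop := ∃ h : g.NMod n, Nt.mk g n h = m

/-- dρ^q as an element of ℝ~. -/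
def Gauge.dpow (g : Gauge) (q : ℕ) : Rt g := GQ.mk g (fun ε => g.ρ ε ^ q) (g.mod_pow q)

/-- dρ^(−q) as an element of ℝ~. -/
def Gauge.dpowNeg (g : Gauge) (q : ℕ) : Rt g := GQ.mk g (fun ε => g.ρ ε ^ (-(q:ℤ))) (g.mod_zpow_neg q)

def GQ.zero (g : Gauge) (𝕜 : Type) [RCLike 𝕜] : GQ g 𝕜 :=
  GQ.mk g (fun _ => 0) (g.mod_const 0 (by simp))

def GQ.one (g : Gauge) (𝕜 : Type) [RCLike 𝕜] : GQ g 𝕜 :=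
  GQ.mk g (fun _ => 1) (g.mod_const 1 (by simp))

variable {𝕜 : Type} [RCLike 𝕜]

/-- Order relation on ℝ~ (via some representatives). -/
def Rt.le (g : Gauge) (x y : Rt g) : Prop :=
  ∃ a b : {u : ℝ → ℝ // g.Mod u}, Quotient.mk (gSetoid g ℝ) a = x ∧
    Quotient.mk (gSetoid g ℝ) b = y ∧ EvS fun ε => a.1 ε ≤ b.1 ε

/-- Strict order relation on ℝ~: `x < y` iff `y − x ≥ dρ^m` for some m. -/
def Rt.lt (g : Gauge) (x y : Rt g) : Prop :=
  ∃ a b : {u : ℝ → ℝ // g.Mod u}, Quotient.mk (gSetoid g ℝ) a = x ∧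
    Quotient.mk (gSetoid g ℝ) b = y ∧ ∃ m : ℕ, EvS fun ε => g.ρ ε ^ m ≤ b.1 ε - a.1 ε

/-- Order on ℕ~. -/
def Nt.le (g : Gauge) (m n : Nt g) : Prop :=
  ∃ a b : {k : ℝ → ℕ // g.NMod k}, Quotient.mk (natSetoid g) a = m ∧
    Quotient.mk (natSetoid g) b = n ∧ EvS fun ε => a.1 ε ≤ b.1 ε

/-- The relation `|z − w| < r` between generalized numbers, r ∈ ℝ~. -/
def GQ.absLt (g : Gauge) (z w : GQ g 𝕜) (r : Rt g) : Prop :=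
  ∃ a b : {x : ℝ → 𝕜 // g.Mod x}, ∃ u : {x : ℝ → ℝ // g.Mod x},
    Quotient.mk (gSetoid g 𝕜) a = z ∧ Quotient.mk (gSetoid g 𝕜) b = w ∧
    Quotient.mk (gSetoid g ℝ) u = r ∧
    ∃ m : ℕ, EvS fun ε => ‖a.1 ε - b.1 ε‖ + g.ρ ε ^ m ≤ u.1 ε

/-- The relation `|z − w| ≤ r`. -/
def GQ.absLe (g : Gauge) (z w : GQ g 𝕜) (r : Rt g) : Prop :=
  ∃ a b : {x : ℝ → 𝕜 // g.Mod x}, ∃ u : {x : ℝ → ℝ // g.Mod x},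
    Quotient.mk (gSetoid g 𝕜) a = z ∧ Quotient.mk (gSetoid g 𝕜) b = w ∧
    Quotient.mk (gSetoid g ℝ) u = r ∧ EvS fun ε => ‖a.1 ε - b.1 ε‖ ≤ u.1 ε

/-- `x ∈ ℂ~` is invertible. -/
def GQ.Invertible (g : Gauge) (x : GQ g 𝕜) : Prop :=
  ∃ a : {u : ℝ → 𝕜 // g.Mod u}, Quotient.mk (gSetoid g 𝕜) a = x ∧
    ∃ m : ℕ, EvS fun ε => g.ρ ε ^ m ≤ ‖a.1 ε‖

/-- l is the hyperlimit of the hypersequence a. -/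
def HyperLim (g : Gauge) (a : Nt g → GQ g 𝕜) (l : GQ g 𝕜) : Prop :=
  ∀ q : ℕ, ∃ M : Nt g, ∀ n : Nt g, Nt.le g M n → GQ.absLt g (a n) l (g.dpow q)

/-- ρ-moderate over hypersums. -/
def Gauge.SMod (g : Gauge) (A : ℕ → ℝ → 𝕜) : Prop :=
  ∀ N : ℝ → ℕ, g.NMod N → g.Mod fun ε => ∑ n ∈ Finset.range (N ε + 1), A n ε

/-- Hyperseries equivalence of coefficient nets. -/
def Gauge.SEquiv (g : Gauge) (A B : ℕ → ℝ → 𝕜) : Prop :=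
  ∀ N M : ℝ → ℕ, g.NMod N → g.NMod M →
    g.Negl fun ε => ∑ n ∈ Finset.Icc (N ε) (M ε), (A n ε - B n ε)

theorem nat_eq_of_abs_sub_lt_one {a b : ℕ} (h : |(a:ℝ) - b| < 1) : a = b := by
  rcases lt_trichotomy a b with hlt | he | hgt
  · exfalso
    have h1 : (a:ℝ) + 1 ≤ b := by exact_mod_cast Nat.succ_le_of_lt hlt
    have h2 := abs_lt.mp h
    linarith [h2.1]
  · exact he
  · exfalso
    have h1 : (b:ℝ) + 1 ≤ a := by exact_mod_cast Nat.succ_le_of_lt hgt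
    have h2 := abs_lt.mp h
    linarith [h2.2]

theorem natEqEv (g : Gauge) {N M : ℝ → ℕ} (h : g.Negl fun ε => (N ε : ℝ) - M ε) :
    EvS fun ε => N ε = M ε := by
  refine ((h 1).and (g.evs_le (by norm_num : (0:ℝ) < 1/2))).mono fun ε hε hε1 hh => ?_
  obtain ⟨h1, h2⟩ := hh
  apply nat_eq_of_abs_sub_lt_one
  have : ‖(N ε : ℝ) - M ε‖ = |(N ε : ℝ) - M ε| := Real.norm_eq_abs _
  rw [this] at h1
  calc |(N ε:ℝ) - M ε| ≤ g.ρ ε ^ 1 := h1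
    _ = g.ρ ε := pow_one _
    _ ≤ 1/2 := h2
    _ < 1 := by norm_num

/-- Lift a representative-level construction indexed by hypernaturals to ℕ~. -/
def Nt.lift (g : Gauge) (F : (ℝ → ℕ) → ℝ → 𝕜)
    (hmod : ∀ N, g.NMod N → g.Mod (F N))
    (hcong : ∀ N M : ℝ → ℕ, EvS (fun ε => N ε = M ε) → EvS fun ε => F N ε = F M ε) :
    Nt g → GQ g 𝕜 :=
  Quotient.lift (fun N => GQ.mk g (F N.1) (hmod N.1 N.2)) (by
    intro a b hab
    apply Quotient.sound
    exact g.negl_of_evs_eq (hcong a.1 b.1 (natEqEv g hab)))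

def Nt.lift₂ (g : Gauge) (F : (ℝ → ℕ) → (ℝ → ℕ) → ℝ → 𝕜)
    (hmod : ∀ N M, g.NMod N → g.NMod M → g.Mod (F N M))
    (hcong : ∀ N N' M M' : ℝ → ℕ, EvS (fun ε => N ε = N' ε) → EvS (fun ε => M ε = M' ε) →
      EvS fun ε => F N M ε = F N' M' ε) :
    Nt g → Nt g → GQ g 𝕜 :=
  Quotient.lift₂ (fun N M => GQ.mk g (F N.1 M.1) (hmod N.1 M.1 N.2 M.2)) (by
    intro a b a' b' ha hb
    apply Quotient.sound
    exact g.negl_of_evs_eq (hcong a.1 a'.1 b.1 b'.1 (natEqEv g ha) (natEqEv g hb)))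

/-- The hypersequence of partial hypersums N ↦ Σ_{n=0}^{N} a_n. -/
def partialSum (g : Gauge) (A : ℕ → ℝ → 𝕜) (hA : g.SMod A) : Nt g → GQ g 𝕜 :=
  Nt.lift g (fun N ε => ∑ n ∈ Finset.range (N ε + 1), A n ε) (fun N hN => hA N hN)
    (fun N M h => h.mono fun ε _ _ he => by (try simp only []); rw [he])

/-- The hyperseries Σ_{n∈ℕ~} a_n converges to s. -/
def HSConv (g : Gauge) (A : ℕ → ℝ → 𝕜) (hA : g.SMod A) (s : GQ g 𝕜) : Prop :=
  HyperLim g (partialSum g A hA) s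

theorem Gauge.NMod.mono {g : Gauge} {a b : ℝ → ℕ} (hb : g.NMod b) (h : ∀ ε, a ε ≤ b ε) :
    g.NMod a := by
  refine Gauge.Mod.of_norm_le hb fun ε _ _ => ?_
  rw [Real.norm_eq_abs, abs_of_nonneg (Nat.cast_nonneg _), abs_of_nonneg (Nat.cast_nonneg _)]
  exact_mod_cast h ε

theorem Gauge.SMod.range {g : Gauge} {A : ℕ → ℝ → 𝕜} (hA : g.SMod A) {N : ℝ → ℕ}
    (hN : g.NMod N) : g.Mod fun ε => ∑ n ∈ Finset.range (N ε), A n ε := by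
  have hN' : g.NMod fun ε => N ε - 1 := hN.mono fun ε => Nat.sub_le _ _
  obtain ⟨K, hK⟩ := hA _ hN'
  refine ⟨K, hK.mono fun ε hε hε1 h => ?_⟩
  rcases Nat.eq_zero_or_pos (N ε) with h0 | h0
  · show ‖∑ n ∈ Finset.range (N ε), A n ε‖ ≤ _
    rw [h0]
    simp only [Finset.range_zero, Finset.sum_empty, norm_zero]
    exact le_trans (norm_nonneg _) h
  · have he : N ε - 1 + 1 = N ε := Nat.succ_pred_eq_of_pos h0
    show ‖∑ n ∈ Finset.range (N ε), A n ε‖ ≤ _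
    rw [← he]
    exact h

theorem Gauge.SMod.termMod {g : Gauge} {A : ℕ → ℝ → 𝕜} (hA : g.SMod A) {N : ℝ → ℕ}
    (hN : g.NMod N) : g.Mod fun ε => A (N ε) ε := by
  have h := (hA N hN).sub (hA.range hN)
  have heq : (fun ε => (∑ n ∈ Finset.range (N ε + 1), A n ε) -
      ∑ n ∈ Finset.range (N ε), A n ε) = fun ε => A (N ε) ε := by
    funext ε
    rw [Finset.sum_range_succ]
    ring
  rwa [heq] at h

/-- The extension of the terms of a hyperseries to ℕ~ : n ↦ a_n. -/
def GQ.term (g : Gauge) (A : ℕ → ℝ → 𝕜) (hA : g.SMod A) : Nt g → GQ g 𝕜 :=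
  Nt.lift g (fun N ε => A (N ε) ε) (fun _ hN => hA.termMod hN)
    (fun N M h => h.mono fun ε _ _ he => by (try simp only []); rw [he])

theorem norm_sum_Icc_le (A : ℕ → 𝕜) (N M : ℕ) :
    ‖∑ n ∈ Finset.Icc N M, A n‖ ≤
      ‖∑ n ∈ Finset.range (M+1), A n‖ + ‖∑ n ∈ Finset.range N, A n‖ := by
  rcases le_or_gt N (M+1) with h | h
  · have key : (∑ n ∈ Finset.range N, A n) + (∑ n ∈ Finset.Icc N M, A n)
        = ∑ n ∈ Finset.range (M+1), A n := by
      rw [Finset.range_eq_Ico, Finset.range_eq_Ico, show Finset.Icc N M = Finset.Ico N (M+1) by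
        ext; simp only [Finset.mem_Icc, Finset.mem_Ico]; omega]
      exact Finset.sum_Ico_consecutive (f := A) (Nat.zero_le N) h
    have heq : ∑ n ∈ Finset.Icc N M, A n
        = (∑ n ∈ Finset.range (M+1), A n) - ∑ n ∈ Finset.range N, A n := by
      rw [← key]; ring
    rw [heq]
    exact norm_sub_le _ _
  · rw [Finset.Icc_eq_empty (by omega)]
    simp only [Finset.sum_empty, norm_zero]
    positivity

theorem Gauge.SMod.IccMod {g : Gauge} {A : ℕ → ℝ → 𝕜} (hA : g.SMod A) {N M : ℝ → ℕ}
    (hN : g.NMod N) (hM : g.NMod M) :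
    g.Mod fun ε => ∑ n ∈ Finset.Icc (N ε) (M ε), A n ε := by
  have h1 := (hA M hM).norm
  have h2 := (hA.range hN).norm
  refine Gauge.Mod.of_norm_le (h1.add h2) fun ε _ _ => ?_
  have hnn : (0:ℝ) ≤ ‖∑ n ∈ Finset.range (M ε + 1), A n ε‖ + ‖∑ n ∈ Finset.range (N ε), A n ε‖ :=
    add_nonneg (norm_nonneg _) (norm_nonneg _)
  rw [abs_of_nonneg hnn]
  exact norm_sum_Icc_le _ _ _

/-- The hypersum Σ_{n=N}^{M} a_n as a function of N, M ∈ ℕ~. -/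
def hypersum (g : Gauge) (A : ℕ → ℝ → 𝕜) (hA : g.SMod A) : Nt g → Nt g → GQ g 𝕜 :=
  Nt.lift₂ g (fun N M ε => ∑ n ∈ Finset.Icc (N ε) (M ε), A n ε)
    (fun _ _ hN hM => hA.IccMod hN hM)
    (fun N N' M M' h h' => (h.and h').mono fun ε _ _ he => by
      (try simp only []); rw [he.1, he.2])

theorem Gauge.NMod.add {g : Gauge} {a b : ℝ → ℕ} (ha : g.NMod a) (hb : g.NMod b) :
    g.NMod fun ε => a ε + b ε := by
  have h := Gauge.Mod.add (𝕜 := ℝ) ha hb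
  show g.Mod fun ε => ((a ε + b ε : ℕ) : ℝ)
  have heq : (fun ε => ((a ε + b ε : ℕ) : ℝ)) = fun ε => ((a ε : ℝ) + (b ε : ℝ)) := by
    funext ε; push_cast; ring
  rwa [heq]

/-- Addition on ℕ~. -/
def Nt.add (g : Gauge) : Nt g → Nt g → Nt g :=
  Quotient.lift₂ (fun a b => Nt.mk g (fun ε => a.1 ε + b.1 ε) (a.2.add b.2)) (by
    intro a b a' b' ha hb
    apply Quotient.sound
    have h := ((natEqEv g ha).and (natEqEv g hb))
    exact g.negl_of_evs_eq (h.mono fun ε _ _ he => by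
      show ((a.1 ε + b.1 ε : ℕ) : ℝ) = ((a'.1 ε + b'.1 ε : ℕ) : ℝ)
      rw [he.1, he.2]))

/-- Subtraction on generalized numbers. -/
def GQ.sub (g : Gauge) : GQ g 𝕜 → GQ g 𝕜 → GQ g 𝕜 :=
  Quotient.lift₂ (fun a b => GQ.mk g (fun ε => a.1 ε - b.1 ε) (a.2.sub b.2)) (by
    intro a b a' b' ha hb
    apply Quotient.sound
    show g.Negl _
    have h := Gauge.Negl.sub ha hb
    have heq : (fun ε => (a.1 ε - a'.1 ε) - (b.1 ε - b'.1 ε))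
        = fun ε => (a.1 ε - b.1 ε) - (a'.1 ε - b'.1 ε) := by funext ε; ring
    rwa [heq] at h)

/-- Multiplication on generalized numbers. -/
def GQ.mul (g : Gauge) : GQ g 𝕜 → GQ g 𝕜 → GQ g 𝕜 :=
  Quotient.lift₂ (fun a b => GQ.mk g (fun ε => a.1 ε * b.1 ε) (a.2.mul b.2)) (by
    intro a b a' b' ha hb
    apply Quotient.sound
    show g.Negl _
    have h1 : g.Negl fun ε => (a.1 ε - a'.1 ε) * b.1 ε := Gauge.Negl.mul_mod ha b.2
    have h2 : g.Negl fun ε => (b.1 ε - b'.1 ε) * a'.1 ε := Gauge.Negl.mul_mod hb a'.2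
    have h := h1.add h2
    have heq : (fun ε => (a.1 ε - a'.1 ε) * b.1 ε + (b.1 ε - b'.1 ε) * a'.1 ε)
        = fun ε => a.1 ε * b.1 ε - a'.1 ε * b'.1 ε := by funext ε; ring
    rwa [heq] at h)

/-- The absolute value |·| : ℂ~ → ℝ~. -/
def GQ.abs (g : Gauge) : GQ g 𝕜 → Rt g :=
  Quotient.lift (fun a => GQ.mk g (fun ε => ‖a.1 ε‖) a.2.norm) (by
    intro a b hab
    apply Quotient.sound
    show g.Negl _
    intro q
    refine (hab q).mono fun ε _ _ h => ?_
    show ‖‖a.1 ε‖ - ‖b.1 ε‖‖ ≤ _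
    rw [Real.norm_eq_abs]
    exact le_trans (abs_norm_sub_norm_le _ _) h)

/-- Weakly ρ-moderate coefficient nets. -/
def Gauge.WMod (g : Gauge) (a : ℕ → ℝ → ℂ) : Prop :=
  ∃ Q R : ℕ, EvS fun ε => ∀ n : ℕ, ‖a n ε‖ ≤ g.ρ ε ^ (-((n * Q + R : ℕ) : ℤ))

/-- Strong ρ-equivalence of coefficient nets. -/
def Gauge.StrEquiv (g : Gauge) (a b : ℕ → ℝ → ℂ) : Prop :=
  ∀ q r : ℕ, EvS fun ε => ∀ n : ℕ, ‖a n ε - b n ε‖ ≤ g.ρ ε ^ (n * q + r)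

/-- The net of radii of convergence r_ε = (limsup_n |a_{nε}|^{1/n})⁻¹ ∈ [0,∞]. -/
def radNet (a : ℕ → ℝ → ℂ) (ε : ℝ) : ENNReal :=
  (Filter.limsup (fun n : ℕ => ENNReal.ofReal (‖a n ε‖ ^ ((n : ℝ)⁻¹))) Filter.atTop)⁻¹

/-- Condition (i): |z − c| < rad (a_n)_c, as classes (via representatives). -/
def RadLt (g : Gauge) (a : ℕ → ℝ → ℂ) (z c : Ct g) : Prop :=
  ∃ zr cr : ℝ → ℂ, ∃ a' : ℕ → ℝ → ℂ, IsRep g zr z ∧ IsRep g cr c ∧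
    g.WMod a' ∧ g.StrEquiv a a' ∧
    ∃ m : ℕ, EvS fun ε => ENNReal.ofReal (‖zr ε - cr ε‖ + g.ρ ε ^ m) ≤ radNet a' ε

/-- The coefficient net of the hyper-power series Σ a_n (z−c)^n. -/
def PSeriesNet (a : ℕ → ℝ → ℂ) (zr cr : ℝ → ℂ) : ℕ → ℝ → ℂ :=
  fun n ε => a n ε * (zr ε - cr ε) ^ n

/-- Conditions (ii)-(iv) of the definition of the set of convergence, for given
representatives. -/
def ConvConds (g : Gauge) (a : ℕ → ℝ → ℂ) (zr cr : ℝ → ℂ) (z : Ct g) : Prop :=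
  ∃ hS : g.SMod (PSeriesNet a zr cr),
    (EvS fun ε => Summable fun n : ℕ => PSeriesNet a zr cr n ε) ∧
    (∃ hm : g.Mod fun ε => ∑' n : ℕ, PSeriesNet a zr cr n ε,
      HyperLim g (partialSum g _ hS) (GQ.mk g _ hm)) ∧
    (∀ zr' : ℝ → ℂ, IsRep g zr' z →
      (EvS fun ε => Summable fun n : ℕ => (n : ℂ) * a n ε * (zr' ε - cr ε) ^ (n - 1)) ∧
      g.Mod fun ε => ∑' n : ℕ, (n : ℂ) * a n ε * (zr' ε - cr ε) ^ (n - 1))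

/-- The set of convergence σ((a_n)_c, c) of a hyper-power series. -/
def convSet (g : Gauge) (a : ℕ → ℝ → ℂ) (c : Ct g) : Set (Ct g) :=
  { z | RadLt g a z c ∧
      ∃ zr cr : ℝ → ℂ, ∃ a' : ℕ → ℝ → ℂ, IsRep g zr z ∧ IsRep g cr c ∧
        g.WMod a' ∧ g.StrEquiv a a' ∧ ConvConds g a' zr cr z }

/-- Sharply open subsets of ℂ~. -/
def SharplyOpen (g : Gauge) (U : Set (Ct g)) : Prop :=
  ∀ z ∈ U, ∃ r : Rt g, Rt.lt g (GQ.zero g ℝ) r ∧ ∀ w : Ct g, GQ.absLt g w z r → w ∈ U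

/-- `P ε` for all small ε in L. -/
def EvSOn (L : Set ℝ) (P : ℝ → Prop) : Prop :=
  ∃ ε₀ : ℝ, 0 < ε₀ ∧ ε₀ ≤ 1 ∧ ∀ ε ∈ L, 0 < ε → ε ≤ ε₀ → P ε

/-- x ∈ ℂ~ is invertible on the subpoint L. -/
def GQ.InvertibleOn (g : Gauge) {𝕜 : Type} [RCLike 𝕜] (L : Set ℝ) (x : GQ g 𝕜) : Prop :=
  ∃ a : {u : ℝ → 𝕜 // g.Mod u}, Quotient.mk (gSetoid g 𝕜) a = x ∧
    ∃ m : ℕ, EvSOn L fun ε => g.ρ ε ^ m ≤ ‖a.1 ε‖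

theorem Gauge.nmod_const (g : Gauge) (c : ℕ) : g.NMod fun _ => c := by
  refine ⟨c + 1, (g.evs_le (by positivity : (0:ℝ) < 1/(c+1))).mono fun ε hε hε1 h3 => ?_⟩
  have hρ := g.pos ε hε hε1
  show ‖((c:ℕ) : ℝ)‖ ≤ _
  rw [Real.norm_eq_abs, abs_of_nonneg (Nat.cast_nonneg _)]
  have hc1 : (0:ℝ) < (c:ℝ) + 1 := by positivity
  calc (c:ℝ) ≤ 1 / g.ρ ε := by
        rw [le_div_iff₀ hρ]
        calc (c:ℝ) * g.ρ ε ≤ (c:ℝ) * (1/(c+1)) :=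
              mul_le_mul_of_nonneg_left h3 (Nat.cast_nonneg c)
          _ ≤ 1 := by rw [mul_one_div, div_le_one hc1]; linarith
    _ = g.ρ ε ^ (-((1:ℕ):ℤ)) := by
        rw [show (-((1:ℕ):ℤ)) = (-1:ℤ) by norm_num, zpow_neg_one, one_div]
    _ ≤ g.ρ ε ^ (-((c+1:ℕ):ℤ)) := g.zpow_neg_le hε hε1 (by omega)

theorem Gauge.SMod.shift {g : Gauge} {𝕜 : Type} [RCLike 𝕜] {A : ℕ → ℝ → 𝕜}
    (hA : g.SMod A) (N₀ : ℕ) : g.SMod fun n ε => A (n + N₀) ε := by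
  intro K hK
  have h1 := hA (fun ε => N₀ + K ε) ((g.nmod_const N₀).add hK)
  have h2 := hA.range (g.nmod_const N₀)
  have h := h1.sub h2
  have heq : (fun ε => (∑ n ∈ Finset.range (N₀ + K ε + 1), A n ε) -
      ∑ n ∈ Finset.range N₀, A n ε) = fun ε => ∑ n ∈ Finset.range (K ε + 1), A (n + N₀) ε := by
    funext ε
    have e1 : (∑ n ∈ Finset.range N₀, A n ε) + (∑ n ∈ Finset.Ico N₀ (N₀ + K ε + 1), A n ε)
        = ∑ n ∈ Finset.range (N₀ + K ε + 1), A n ε :=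
      Finset.sum_range_add_sum_Ico _ (by omega)
    have e2 : ∑ n ∈ Finset.Ico N₀ (N₀ + K ε + 1), A n ε
        = ∑ n ∈ Finset.range (K ε + 1), A (N₀ + n) ε := by
      rw [Finset.sum_Ico_eq_sum_range, show N₀ + K ε + 1 - N₀ = K ε + 1 by omega]
    rw [← e1, e2]
    rw [add_sub_cancel_left]
    exact Finset.sum_congr rfl fun n _ => by rw [Nat.add_comm]
  rwa [heq] at h

section PowerSeries

open Metric

variable {a : ℕ → ℂ} {R : ℝ}

theorem norm_mul_pow_le_of_mem_ball (n : ℕ) {w : ℂ} (hw : w ∈ ball (0 : ℂ) R) :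
    ‖a n * w ^ n‖ ≤ ‖a n‖ * R ^ n := by
  rw [mem_ball_zero_iff] at hw
  rw [norm_mul, norm_pow]
  gcongr

theorem differentiableOn_tsum_mul_pow (hsum : Summable fun n => ‖a n‖ * R ^ n) :
    DifferentiableOn ℂ (fun w => ∑' n, a n * w ^ n) (ball 0 R) :=
  Complex.differentiableOn_tsum_of_summable_norm hsum (fun n => by fun_prop) isOpen_ball
    fun n _ hw => norm_mul_pow_le_of_mem_ball n hw

theorem hasSum_deriv_tsum_mul_pow (hsum : Summable fun n => ‖a n‖ * R ^ n) {w : ℂ}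
    (hw : w ∈ ball (0 : ℂ) R) :
    HasSum (fun n : ℕ => (n : ℂ) * a n * w ^ (n - 1)) (deriv (fun w => ∑' n, a n * w ^ n) w) := by
  have h := Complex.hasSum_deriv_of_summable_norm hsum (fun n => by fun_prop) isOpen_ball
    (fun n _ hw => norm_mul_pow_le_of_mem_ball n hw) hw
  refine h.congr_fun fun n => ?_
  rw [((hasDerivAt_pow n w).const_mul (a n)).deriv]
  ring

theorem hasDerivAt_tsum_mul_pow (hsum : Summable fun n => ‖a n‖ * R ^ n) {w : ℂ}
    (hw : w ∈ ball (0 : ℂ) R) :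
    HasDerivAt (fun w => ∑' n, a n * w ^ n) (∑' n : ℕ, (n : ℂ) * a n * w ^ (n - 1)) w := by
  rw [(hasSum_deriv_tsum_mul_pow hsum hw).tsum_eq]
  exact ((differentiableOn_tsum_mul_pow hsum).differentiableAt
    (isOpen_ball.mem_nhds hw)).hasDerivAt

theorem continuousOn_tsum_natCast_mul_pow_sub_one (hsum : Summable fun n => ‖a n‖ * R ^ n) :
    ContinuousOn (fun w => ∑' n : ℕ, (n : ℂ) * a n * w ^ (n - 1)) (ball 0 R) := by
  have hderiv : Set.EqOn (deriv fun w => ∑' n, a n * w ^ n)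
      (fun w => ∑' n : ℕ, (n : ℂ) * a n * w ^ (n - 1)) (ball 0 R) :=
    fun w hw => (hasDerivAt_tsum_mul_pow hsum hw).deriv
  exact (((differentiableOn_tsum_mul_pow hsum).deriv isOpen_ball).continuousOn).congr
    hderiv.symm

theorem iteratedDeriv_tsum_mul_pow_zero (hsum : Summable fun n => ‖a n‖ * R ^ n) (hR : 0 < R)
    (n : ℕ) : iteratedDeriv n (fun w => ∑' k, a k * w ^ k) 0 = n.factorial * a n := by
  set p := FormalMultilinearSeries.ofScalars ℂ a
  have hrad : (R.toNNReal : ENNReal) ≤ p.radius :=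
    p.le_radius_of_summable_norm (by
      simpa [p, FormalMultilinearSeries.ofScalars_norm, Real.coe_toNNReal _ hR.le] using hsum)
  have hps := p.hasFPowerSeriesOnBall (lt_of_lt_of_le (by simpa using hR) hrad)
  have hsum_eq : p.sum = fun w => ∑' k, a k * w ^ k :=
    (FormalMultilinearSeries.ofScalarsSum_eq_tsum (E := ℂ) a).trans (by simp only [smul_eq_mul])
  rw [hsum_eq] at hps
  have := hps.factorial_smul 1 n
  rw [← iteratedDeriv_eq_iteratedFDeriv, FormalMultilinearSeries.ofScalars_apply_eq] at this
  rw [← this]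
  simp [nsmul_eq_mul]

theorem norm_le_div_pow_of_norm_tsum_mul_pow_le (hsum : Summable fun n => ‖a n‖ * R ^ n)
    {r C : ℝ} (hr : 0 < r) (hrR : r < R)
    (hC : ∀ w ∈ sphere (0 : ℂ) r, ‖∑' k, a k * w ^ k‖ ≤ C) (n : ℕ) : ‖a n‖ ≤ C / r ^ n := by
  have hdiff : DiffContOnCl ℂ (fun w => ∑' k, a k * w ^ k) (ball 0 r) :=
    (differentiableOn_tsum_mul_pow hsum).diffContOnCl_ball (closedBall_subset_ball hrR)
  have h := Complex.norm_iteratedDeriv_le_of_forall_mem_sphere_norm_le n hr hdiff hC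
  rw [iteratedDeriv_tsum_mul_pow_zero hsum (hr.trans hrR), norm_mul, Complex.norm_natCast,
    mul_div_assoc] at h
  exact le_of_mul_le_mul_left h (by positivity)

theorem exists_isMaxOn_sphere_norm_tsum_mul_pow (hsum : Summable fun n => ‖a n‖ * R ^ n)
    {r : ℝ} (hr : 0 ≤ r) (hrR : r < R) :
    ∃ t ∈ sphere (0 : ℂ) r, IsMaxOn (fun w => ‖∑' n, a n * w ^ n‖) (sphere 0 r) t :=
  (isCompact_sphere 0 r).exists_isMaxOn (NormedSpace.sphere_nonempty.mpr hr)
    ((differentiableOn_tsum_mul_pow hsum).continuousOn.norm.mono (sphere_subset_ball hrR))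

theorem exists_mem_segment_norm_tsum_mul_pow_sub_le (hsum : Summable fun n => ‖a n‖ * R ^ n)
    {x y : ℂ} (hx : x ∈ ball (0 : ℂ) R) (hy : y ∈ ball (0 : ℂ) R) :
    ∃ τ ∈ segment ℝ x y, ‖∑' n, a n * y ^ n - ∑' n, a n * x ^ n‖
      ≤ ‖∑' n : ℕ, (n : ℂ) * a n * τ ^ (n - 1)‖ * ‖y - x‖ := by
  have hseg : segment ℝ x y ⊆ ball 0 R := (convex_ball 0 R).segment_subset hx hy
  have hcompact : IsCompact (segment ℝ x y) := by
    rw [segment_eq_image']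
    exact isCompact_Icc.image (by fun_prop)
  obtain ⟨τ, hτ, hmax⟩ := hcompact.exists_isMaxOn ⟨x, left_mem_segment ℝ x y⟩
    ((continuousOn_tsum_natCast_mul_pow_sub_one hsum).norm.mono hseg)
  exact ⟨τ, hτ, Convex.norm_image_sub_le_of_norm_hasDerivWithin_le
    (fun w hw => (hasDerivAt_tsum_mul_pow hsum (hseg hw)).hasDerivWithinAt)
    (fun w hw => hmax hw) (convex_segment x y) (left_mem_segment ℝ x y)
    (right_mem_segment ℝ x y)⟩

end PowerSeries

section Geometric

theorem tsum_geometric_le_two {x : ℝ} (h0 : 0 ≤ x) (h1 : x ≤ 1 / 2) : ∑' n : ℕ, x ^ n ≤ 2 := by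
  rw [tsum_geometric_of_lt_one h0 (by linarith), inv_le_comm₀ (by linarith) two_pos]
  linarith

theorem tsum_natCast_mul_geometric_le_two {x : ℝ} (h0 : 0 ≤ x) (h1 : x ≤ 1 / 2) :
    ∑' n : ℕ, (n : ℝ) * x ^ n ≤ 2 := by
  rw [tsum_coe_mul_geometric_of_norm_lt_one (by rw [Real.norm_of_nonneg h0]; linarith),
    div_le_iff₀ (by nlinarith)]
  nlinarith

theorem norm_sum_range_le_of_le_geometric {E : Type*} [SeminormedAddCommGroup E] {c : ℕ → E}
    {δ x : ℝ} (h0 : 0 ≤ x) (h1 : x ≤ 1 / 2) (h : ∀ n, ‖c n‖ ≤ δ * x ^ n) (K : ℕ) :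
    ‖∑ n ∈ Finset.range K, c n‖ ≤ 2 * δ := by
  have hδ : 0 ≤ δ := by simpa using (norm_nonneg _).trans (h 0)
  calc ‖∑ n ∈ Finset.range K, c n‖ ≤ ∑ n ∈ Finset.range K, δ * x ^ n :=
        (norm_sum_le _ _).trans (Finset.sum_le_sum fun n _ => h n)
    _ = δ * ∑ n ∈ Finset.range K, x ^ n := (Finset.mul_sum _ _ _).symm
    _ ≤ δ * 2 := by
        gcongr
        exact (Summable.sum_le_tsum _ (fun n _ => by positivity)
          (summable_geometric_of_lt_one h0 (by linarith))).trans (tsum_geometric_le_two h0 h1)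
    _ = 2 * δ := mul_comm _ _

end Geometric

theorem EvS.of_forall {P : ℝ → Prop} (h : ∀ ε, 0 < ε → ε ≤ 1 → P ε) : EvS P :=
  ⟨1, one_pos, le_rfl, h⟩

theorem EvS.exists_net {α : Type*} [Nonempty α] {P : ℝ → α → Prop}
    (h : EvS fun ε => ∃ x, P ε x) : ∃ x : ℝ → α, EvS fun ε => P ε (x ε) := by
  classical
  refine ⟨fun ε => if hx : ∃ x, P ε x then hx.choose else Classical.arbitrary α,
    h.mono fun ε _ _ hx => ?_⟩
  simp only [dif_pos hx]
  exact hx.choose_spec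

namespace Gauge

variable (g : Gauge) {𝕜 : Type} [RCLike 𝕜]

theorem evs_pos_le {δ : ℝ} (hδ : 0 < δ) : EvS fun ε => 0 < g.ρ ε ∧ g.ρ ε ≤ δ :=
  (g.evs_le hδ).mono fun ε hε hε1 h => ⟨g.pos ε hε hε1, h⟩

theorem evs_inv_pow_lt (K : ℕ) : EvS fun ε => (g.ρ ε ^ K)⁻¹ < (g.ρ ε ^ (K + 1))⁻¹ :=
  (g.evs_pos_le (by norm_num : (0 : ℝ) < 1 / 2)).mono fun ε _ _ ⟨hρ, hρ2⟩ =>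
    inv_strictAnti₀ (by positivity) (pow_lt_pow_right_of_lt_one₀ hρ (by linarith) (by omega))

variable {g}

theorem mod_iff_evs_norm_le_inv_pow {x : ℝ → 𝕜} :
    g.Mod x ↔ ∃ N : ℕ, EvS fun ε => ‖x ε‖ ≤ (g.ρ ε ^ N)⁻¹ := by
  simp only [Mod, zpow_neg, zpow_natCast]

theorem negl_of_evs_norm_le_mul (C : ℝ) {x : ℝ → 𝕜}
    (h : ∀ q : ℕ, EvS fun ε => ‖x ε‖ ≤ C * g.ρ ε ^ q) : g.Negl x := by
  intro q
  refine ((h (q + 1)).and (g.evs_pos_le (by positivity : (0 : ℝ) < 1 / (|C| + 1)))).mono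
    fun ε _ _ ⟨hx, hρ, hρC⟩ => hx.trans ?_
  have hCρ : C * g.ρ ε ≤ 1 := by
    calc C * g.ρ ε ≤ |C| * (1 / (|C| + 1)) := by
          gcongr
          exact le_abs_self C
      _ ≤ 1 := by
          rw [mul_one_div, div_le_one (by positivity)]
          linarith
  calc C * g.ρ ε ^ (q + 1) = (C * g.ρ ε) * g.ρ ε ^ q := by ring
    _ ≤ 1 * g.ρ ε ^ q := by gcongr
    _ = g.ρ ε ^ q := one_mul _

theorem Negl.of_evs_norm_le {x y : ℝ → 𝕜} (hx : g.Negl x) (h : EvS fun ε => ‖y ε‖ ≤ ‖x ε‖) :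
    g.Negl y :=
  fun q => ((hx q).and h).mono fun _ _ _ ⟨hx, hy⟩ => hy.trans hx

end Gauge

section Representatives

variable {g : Gauge} {𝕜 : Type} [RCLike 𝕜]

theorem isRep_mk {x : ℝ → 𝕜} (hx : g.Mod x) : IsRep g x (GQ.mk g x hx) := ⟨hx, rfl⟩

theorem isRep_out (z : GQ g 𝕜) : IsRep g (Quotient.out z).1 z :=
  ⟨(Quotient.out z).2, Quotient.out_eq z⟩

theorem IsRep.mod {x : ℝ → 𝕜} {z : GQ g 𝕜} (h : IsRep g x z) : g.Mod x := h.1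

theorem IsRep.negl_sub {x y : ℝ → 𝕜} {z : GQ g 𝕜} (hx : IsRep g x z) (hy : IsRep g y z) :
    g.Negl fun ε => x ε - y ε := by
  obtain ⟨_, rfl⟩ := hx
  obtain ⟨_, hy⟩ := hy
  exact Quotient.exact hy.symm

theorem IsRep.eq {x y : ℝ → 𝕜} {z w : GQ g 𝕜} (hx : IsRep g x z) (hy : IsRep g y w)
    (h : g.Negl fun ε => x ε - y ε) : z = w := by
  obtain ⟨_, rfl⟩ := hx
  obtain ⟨_, rfl⟩ := hy
  exact Quotient.sound h

theorem IsRep.of_negl_sub {x y : ℝ → 𝕜} {z : GQ g 𝕜} (hx : IsRep g x z)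
    (h : g.Negl fun ε => y ε - x ε) : IsRep g y z := by
  have hy : g.Mod y := by simpa using h.mod.add hx.mod
  exact ⟨hy, (isRep_mk hy).eq hx h⟩

theorem negl_of_isRep_zero {x : ℝ → 𝕜} (hx : IsRep g x (GQ.zero g 𝕜)) : g.Negl x := by
  simpa using hx.negl_sub (isRep_mk _)

end Representatives

section HyperLimits

variable {g : Gauge}

theorem absLt_dpow_of_evs_norm_sub_le {x y : Ct g} {xr yr : ℝ → ℂ} (hx : IsRep g xr x)
    (hy : IsRep g yr y) {q : ℕ} (h : EvS fun ε => ‖xr ε - yr ε‖ ≤ g.ρ ε ^ (q + 1)) :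
    GQ.absLt g x y (g.dpow q) := by
  obtain ⟨hxm, rfl⟩ := hx
  obtain ⟨hym, rfl⟩ := hy
  refine ⟨⟨xr, hxm⟩, ⟨yr, hym⟩, ⟨_, g.mod_pow q⟩, rfl, rfl, rfl, q + 1,
    (h.and (g.evs_pos_le (by norm_num : (0 : ℝ) < 1 / 2))).mono fun ε _ _ ⟨h, hρ, hρ2⟩ => ?_⟩
  have : g.ρ ε ^ (q + 1) = g.ρ ε * g.ρ ε ^ q := pow_succ' _ _
  show ‖xr ε - yr ε‖ + g.ρ ε ^ (q + 1) ≤ g.ρ ε ^ q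
  nlinarith [pow_pos hρ q]

theorem GQ.absLt.evs_norm_sub_le {x y : Ct g} {q : ℕ} (h : GQ.absLt g x y (g.dpow q))
    {xr yr : ℝ → ℂ} (hx : IsRep g xr x) (hy : IsRep g yr y) :
    EvS fun ε => ‖xr ε - yr ε‖ ≤ 2 * g.ρ ε ^ q := by
  obtain ⟨a, b, u, ha, hb, hu, m, hev⟩ := h
  have na := (IsRep.negl_sub ⟨a.2, ha⟩ hx) (q + 1)
  have nb := (IsRep.negl_sub ⟨b.2, hb⟩ hy) (q + 1)
  have nu := (IsRep.negl_sub ⟨u.2, hu⟩ (isRep_mk (g.mod_pow q))) (q + 1)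
  refine ((((hev.and na).and nb).and nu).and (g.evs_pos_le (by norm_num : (0 : ℝ) < 1 / 3))).mono
    fun ε _ _ ⟨⟨⟨⟨hab, ha⟩, hb⟩, hu⟩, hρ, hρ3⟩ => ?_
  have hu' : u.1 ε ≤ g.ρ ε ^ q + g.ρ ε ^ (q + 1) := by
    have := (abs_le.mp (Real.norm_eq_abs _ ▸ hu)).2
    linarith
  have htri : ‖xr ε - yr ε‖ ≤ ‖a.1 ε - b.1 ε‖ + ‖a.1 ε - xr ε‖ + ‖b.1 ε - yr ε‖ := by
    calc ‖xr ε - yr ε‖ = ‖(a.1 ε - b.1 ε) - (a.1 ε - xr ε) + (b.1 ε - yr ε)‖ := by ring_nf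
      _ ≤ _ := (norm_add_le _ _).trans (by gcongr; exact norm_sub_le _ _)
  have : g.ρ ε ^ (q + 1) = g.ρ ε * g.ρ ε ^ q := pow_succ' _ _
  nlinarith [pow_pos hρ q, pow_pos hρ m]

theorem HyperLim.unique {s : Nt g → Ct g} {l l' : Ct g} (h : HyperLim g s l)
    (h' : HyperLim g s l') : l = l' := by
  refine (isRep_out l).eq (isRep_out l') (Gauge.negl_of_evs_norm_le_mul 4 fun q => ?_)
  obtain ⟨M, hM⟩ := h q
  obtain ⟨M', hM'⟩ := h' q
  set K := Nt.mk g (fun ε => (Quotient.out M).1 ε + (Quotient.out M').1 ε)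
    ((Quotient.out M).2.add (Quotient.out M').2)
  have hK : Nt.le g M K :=
    ⟨Quotient.out M, _, Quotient.out_eq M, rfl, EvS.of_forall fun _ _ _ => Nat.le_add_right _ _⟩
  have hK' : Nt.le g M' K :=
    ⟨Quotient.out M', _, Quotient.out_eq M', rfl, EvS.of_forall fun _ _ _ => Nat.le_add_left _ _⟩
  refine (((hM K hK).evs_norm_sub_le (isRep_out _) (isRep_out l)).and
    ((hM' K hK').evs_norm_sub_le (isRep_out _) (isRep_out l'))).mono fun ε _ _ ⟨h1, h2⟩ => ?_
  calc ‖(Quotient.out l).1 ε - (Quotient.out l').1 ε‖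
      = ‖((Quotient.out (s K)).1 ε - (Quotient.out l').1 ε)
          - ((Quotient.out (s K)).1 ε - (Quotient.out l).1 ε)‖ := by ring_nf
    _ ≤ 2 * g.ρ ε ^ q + 2 * g.ρ ε ^ q := (norm_sub_le _ _).trans (add_le_add h2 h1)
    _ = 4 * g.ρ ε ^ q := by ring

theorem isRep_partialSum {A : ℕ → ℝ → ℂ} (hA : g.SMod A) (N : Nt g) :
    IsRep g (fun ε => ∑ n ∈ Finset.range ((Quotient.out N).1 ε + 1), A n ε)
      (partialSum g A hA N) := by
  refine ⟨hA _ (Quotient.out N).2, ?_⟩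
  conv_rhs => rw [← Quotient.out_eq N]
  rfl

theorem hsConv_of_evs_norm_sum_sub_le {A : ℕ → ℝ → ℂ} (hA : g.SMod A) {c : ℝ → ℂ}
    (hc : g.Mod c) (h : ∀ q : ℕ, EvS fun ε => ∀ K : ℕ,
      ‖∑ n ∈ Finset.range (K + 1), A n ε - c ε‖ ≤ g.ρ ε ^ q) :
    HSConv g A hA (GQ.mk g c hc) := fun q =>
  ⟨Nt.mk g (fun _ => 0) (g.nmod_const 0), fun N _ =>
    absLt_dpow_of_evs_norm_sub_le (isRep_partialSum hA N) (isRep_mk hc)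
      ((h (q + 1)).mono fun _ _ _ h => h _)⟩

theorem HSConv.congr {A B : ℕ → ℝ → ℂ} {hA : g.SMod A} (hB : g.SMod B) {l : Ct g}
    (h : HSConv g A hA l) (hAB : ∀ q : ℕ, EvS fun ε => ∀ K : ℕ,
      ‖∑ n ∈ Finset.range (K + 1), (A n ε - B n ε)‖ ≤ g.ρ ε ^ q) :
    HSConv g B hB l := by
  intro q
  obtain ⟨M, hM⟩ := h (q + 2)
  refine ⟨M, fun N hN => absLt_dpow_of_evs_norm_sub_le (isRep_partialSum hB N) (isRep_out l) ?_⟩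
  refine ((((hM N hN).evs_norm_sub_le (isRep_partialSum hA N) (isRep_out l)).and (hAB (q + 2))).and
    (g.evs_pos_le (by norm_num : (0 : ℝ) < 1 / 3))).mono fun ε _ _ ⟨⟨h1, h2⟩, hρ, hρ3⟩ => ?_
  set K := (Quotient.out N).1 ε
  have h2 := h2 K
  rw [Finset.sum_sub_distrib] at h2
  have : g.ρ ε ^ (q + 2) = g.ρ ε * g.ρ ε ^ (q + 1) := pow_succ' _ _
  calc ‖∑ n ∈ Finset.range (K + 1), B n ε - (Quotient.out l).1 ε‖
      = ‖(∑ n ∈ Finset.range (K + 1), A n ε - (Quotient.out l).1 ε)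
          - (∑ n ∈ Finset.range (K + 1), A n ε - ∑ n ∈ Finset.range (K + 1), B n ε)‖ := by
        ring_nf
    _ ≤ 2 * g.ρ ε ^ (q + 2) + g.ρ ε ^ (q + 2) := (norm_sub_le _ _).trans (add_le_add h1 h2)
    _ ≤ g.ρ ε ^ (q + 1) := by nlinarith [pow_pos hρ (q + 1)]

end HyperLimits

theorem exists_evs_norm_le_of_absLt_zero {g : Gauge} (M : Rt g) :
    ∃ R : ℕ, ∀ x : Ct g, GQ.absLt g x (GQ.zero g ℂ) M → ∀ xr : ℝ → ℂ, IsRep g xr x →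
      EvS fun ε => ‖xr ε‖ ≤ (g.ρ ε ^ R)⁻¹ := by
  obtain ⟨RM, hRM⟩ := Gauge.mod_iff_evs_norm_le_inv_pow.1 (isRep_out M).mod
  refine ⟨RM + 1, fun x ⟨a, b, u, ha, hb, hu, m, hev⟩ xr hxr => ?_⟩
  refine (((((hev.and ((hxr.negl_sub ⟨a.2, ha⟩) 1)).and (negl_of_isRep_zero ⟨b.2, hb⟩ 1)).and
    ((IsRep.negl_sub ⟨u.2, hu⟩ (isRep_out M)) 1)).and hRM).and
    (g.evs_pos_le (by norm_num : (0 : ℝ) < 1 / 3))).mono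
    fun ε _ _ ⟨⟨⟨⟨⟨hab, ha⟩, hb⟩, hu⟩, hM⟩, hρ, hρ3⟩ => ?_
  have hRM1 : 1 ≤ (g.ρ ε ^ RM)⁻¹ :=
    (one_le_inv₀ (by positivity)).2 (pow_le_one₀ hρ.le (by linarith))
  have hρinv : 3 ≤ (g.ρ ε)⁻¹ := by rw [le_inv_comm₀ (by norm_num) hρ]; linarith
  rw [pow_one] at ha hb hu
  have hu' : u.1 ε ≤ (g.ρ ε ^ RM)⁻¹ + g.ρ ε := by
    have h₁ := (abs_le.mp (Real.norm_eq_abs _ ▸ hu)).2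
    have h₂ := (le_abs_self _).trans (Real.norm_eq_abs _ ▸ hM)
    linarith
  have htri : ‖xr ε‖ ≤ ‖xr ε - a.1 ε‖ + ‖a.1 ε - b.1 ε‖ + ‖b.1 ε‖ := by
    calc ‖xr ε‖ = ‖(xr ε - a.1 ε) + (a.1 ε - b.1 ε) + b.1 ε‖ := by ring_nf
      _ ≤ _ := norm_add₃_le
  rw [pow_succ, mul_inv]
  nlinarith [pow_pos hρ m]

/-- The shape of Cauchy's estimates on the discs `|w| ≤ dρ^(-P)` for a net bounded by `dρ^(-R₀)`. -/
def Gauge.RapidDecay (g : Gauge) (T : ℕ → ℝ → ℂ) : Prop :=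
  ∃ R₀ : ℕ, ∀ P : ℕ, EvS fun ε => ∀ n, ‖T n ε‖ ≤ (g.ρ ε ^ R₀)⁻¹ * (g.ρ ε ^ P) ^ n

namespace Gauge.RapidDecay

variable {g : Gauge} {T : ℕ → ℝ → ℂ}

theorem wmod (h : g.RapidDecay T) : g.WMod T := by
  obtain ⟨R₀, h⟩ := h
  exact ⟨0, R₀, (h 0).mono fun ε _ _ h n => by simpa [zpow_neg] using h n⟩

theorem mod_apply_zero (h : g.RapidDecay T) : g.Mod (T 0) := by
  obtain ⟨R₀, h⟩ := h
  exact ⟨R₀, (h 0).mono fun ε _ _ h => by simpa [zpow_neg] using h 0⟩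

theorem negl_apply_of_one_le (h : g.RapidDecay T) {N : ℝ → ℕ} (hN : EvS fun ε => 1 ≤ N ε) :
    g.Negl fun ε => T (N ε) ε := by
  obtain ⟨R₀, h⟩ := h
  intro q
  refine ((h (R₀ + q)).and hN).mono fun ε hε hε1 ⟨h, hN⟩ => (h _).trans ?_
  have hρ := g.pos ε hε hε1
  calc (g.ρ ε ^ R₀)⁻¹ * (g.ρ ε ^ (R₀ + q)) ^ N ε ≤ (g.ρ ε ^ R₀)⁻¹ * (g.ρ ε ^ (R₀ + q)) ^ 1 :=
        mul_le_mul_of_nonneg_left (pow_le_pow_of_le_one (by positivity)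
          (pow_le_one₀ hρ.le (g.le_one ε hε hε1)) hN) (by positivity)
    _ = g.ρ ε ^ q := by rw [pow_one, pow_add, inv_mul_cancel_left₀ (by positivity)]

theorem mul_pow (h : g.RapidDecay T) {z : ℝ → ℂ} (hz : g.Mod z) :
    g.RapidDecay fun n ε => T n ε * z ε ^ n := by
  obtain ⟨R₀, h⟩ := h
  obtain ⟨K, hK⟩ := Gauge.mod_iff_evs_norm_le_inv_pow.1 hz
  refine ⟨R₀, fun P => ((h (P + K)).and hK).mono fun ε hε hε1 ⟨h, hz⟩ n => ?_⟩
  have hρ := g.pos ε hε hε1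
  calc ‖T n ε * z ε ^ n‖ = ‖T n ε‖ * ‖z ε‖ ^ n := by rw [norm_mul, norm_pow]
    _ ≤ (g.ρ ε ^ R₀)⁻¹ * (g.ρ ε ^ (P + K)) ^ n * ((g.ρ ε ^ K)⁻¹) ^ n := by
        gcongr
        exact h n
    _ = (g.ρ ε ^ R₀)⁻¹ * (g.ρ ε ^ P) ^ n := by
        rw [mul_assoc, ← _root_.mul_pow, pow_add, mul_inv_cancel_right₀ (by positivity)]

theorem evs_norm_sum_sub_le (h : g.RapidDecay T) (q : ℕ) :
    EvS fun ε => ∀ K : ℕ, ‖∑ n ∈ Finset.range (K + 1), T n ε - T 0 ε‖ ≤ g.ρ ε ^ q := by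
  obtain ⟨R₀, h⟩ := h
  refine ((h (R₀ + q + 1)).and (g.evs_pos_le (by norm_num : (0 : ℝ) < 1 / 2))).mono
    fun ε _ _ ⟨h, hρ, hρ2⟩ K => ?_
  have hx : g.ρ ε ^ (R₀ + q + 1) ≤ 1 / 2 :=
    (pow_le_of_le_one hρ.le (by linarith) (by omega)).trans hρ2
  rw [Finset.sum_range_succ', add_sub_cancel_right]
  calc ‖∑ n ∈ Finset.range K, T (n + 1) ε‖
      ≤ 2 * ((g.ρ ε ^ R₀)⁻¹ * g.ρ ε ^ (R₀ + q + 1)) :=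
        norm_sum_range_le_of_le_geometric (by positivity) hx
          (fun n => (h (n + 1)).trans_eq (by ring)) K
    _ = 2 * g.ρ ε * g.ρ ε ^ q := by
        rw [pow_succ, pow_add]
        field_simp
    _ ≤ g.ρ ε ^ q := by nlinarith [pow_pos hρ q]

theorem smod (h : g.RapidDecay T) : g.SMod T := by
  obtain ⟨R₀, h⟩ := h
  intro N _
  refine Gauge.mod_iff_evs_norm_le_inv_pow.2 ⟨R₀ + 1, ((h 1).and
    (g.evs_pos_le (by norm_num : (0 : ℝ) < 1 / 2))).mono fun ε _ _ ⟨h, hρ, hρ2⟩ => ?_⟩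
  calc ‖∑ n ∈ Finset.range (N ε + 1), T n ε‖ ≤ 2 * (g.ρ ε ^ R₀)⁻¹ :=
        norm_sum_range_le_of_le_geometric hρ.le hρ2 (fun n => by simpa using h n) _
    _ ≤ (g.ρ ε)⁻¹ * (g.ρ ε ^ R₀)⁻¹ := by
        gcongr
        rw [le_inv_comm₀ two_pos hρ]
        linarith
    _ = (g.ρ ε ^ (R₀ + 1))⁻¹ := by rw [pow_succ, mul_inv, mul_comm]

theorem hsConv (h : g.RapidDecay T) (hT : g.SMod T) {c : ℝ → ℂ} (hc : g.Mod c)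
    (h0 : ∀ ε, T 0 ε = c ε) : HSConv g T hT (GQ.mk g c hc) :=
  hsConv_of_evs_norm_sum_sub_le hT hc fun q =>
    (h.evs_norm_sum_sub_le q).mono fun ε _ _ h K => h0 ε ▸ h K

end Gauge.RapidDecay

theorem rapidDecay_iteratedDeriv_div_factorial {g : Gauge} {f : ℝ → ℂ → ℂ}
    (hent : ∀ ε, Differentiable ℂ (f ε)) {Mr : ℝ → ℝ} (hMmod : g.Mod Mr)
    (hbound : ∀ N : ℕ, EvS fun ε => ∀ w : ℂ, ‖w‖ ≤ g.ρ ε ^ (-(N : ℤ)) → ‖f ε w‖ ≤ Mr ε) :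
    g.RapidDecay fun n ε => iteratedDeriv n (f ε) 0 / (n.factorial : ℂ) := by
  obtain ⟨R₀, hR₀⟩ := Gauge.mod_iff_evs_norm_le_inv_pow.1 hMmod
  refine ⟨R₀, fun P => ((hbound P).and hR₀).mono fun ε hε hε1 ⟨hf, hM⟩ n => ?_⟩
  have hρ := g.pos ε hε hε1
  have hcauchy := Complex.norm_iteratedDeriv_le_of_forall_mem_sphere_norm_le n
    (by positivity : 0 < (g.ρ ε ^ P)⁻¹) (hent ε).diffContOnCl fun w hw =>
      hf w (by rw [zpow_neg, zpow_natCast]; exact (mem_sphere_zero_iff_norm.1 hw).le)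
  rw [norm_div, Complex.norm_natCast, div_le_iff₀ (by positivity)]
  calc ‖iteratedDeriv n (f ε) 0‖ ≤ n.factorial * Mr ε / ((g.ρ ε ^ P)⁻¹) ^ n := hcauchy
    _ = Mr ε * (g.ρ ε ^ P) ^ n * n.factorial := by rw [inv_pow, div_inv_eq_mul]; ring
    _ ≤ (g.ρ ε ^ R₀)⁻¹ * (g.ρ ε ^ P) ^ n * n.factorial := by
        gcongr
        exact (le_abs_self _).trans (Real.norm_eq_abs (Mr ε) ▸ hM)

theorem eventually_norm_le_inv_pow_of_ofReal_le_radNet {a : ℕ → ℝ → ℂ} {ε r s : ℝ}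
    (hs : 0 < s) (hsr : s < r) (h : ENNReal.ofReal r ≤ radNet a ε) :
    ∀ᶠ n in atTop, ‖a n ε‖ ≤ s⁻¹ ^ n := by
  have hlim : limsup (fun n : ℕ => ENNReal.ofReal (‖a n ε‖ ^ ((n : ℝ)⁻¹))) atTop
      < ENNReal.ofReal s⁻¹ := by
    rw [radNet, ENNReal.le_inv_iff_le_inv] at h
    refine h.trans_lt ?_
    rw [← ENNReal.ofReal_inv_of_pos (hs.trans hsr), ENNReal.ofReal_lt_ofReal_iff (by positivity)]
    exact inv_strictAnti₀ hs hsr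
  filter_upwards [eventually_lt_of_limsup_lt hlim, eventually_ge_atTop 1] with n hn hn1
  rw [ENNReal.ofReal_lt_ofReal_iff_of_nonneg (by positivity)] at hn
  calc ‖a n ε‖ = (‖a n ε‖ ^ ((n : ℝ)⁻¹)) ^ n :=
        (Real.rpow_inv_natCast_pow (norm_nonneg _) (by omega)).symm
    _ ≤ s⁻¹ ^ n := by gcongr

theorem exists_strEquiv_ofReal_le_radNet {g : Gauge} {A : ℕ → ℝ → ℂ}
    (hcs : convSet g A (GQ.zero g ℂ) = Set.univ) (N : ℕ) :
    ∃ a : ℕ → ℝ → ℂ, g.StrEquiv A a ∧ EvS fun ε => ENNReal.ofReal (g.ρ ε ^ N)⁻¹ ≤ radNet a ε := by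
  -- condition (i) at the point `dρ^(-(N+1))`
  set z : ℝ → ℂ := fun ε => (((g.ρ ε ^ (N + 1))⁻¹ : ℝ) : ℂ)
  have hz : g.Mod z := Gauge.mod_iff_evs_norm_le_inv_pow.2 ⟨N + 1, EvS.of_forall
    fun ε hε hε1 => by simp [z, abs_of_pos (g.pos ε hε hε1)]⟩
  obtain ⟨⟨zr, cr, a, hzr, hcr, -, hA, m, hrad⟩, -⟩ : GQ.mk g z hz ∈ convSet g A (GQ.zero g ℂ) :=
    hcs ▸ trivial
  refine ⟨a, hA, (((hrad.and (hzr.negl_sub (isRep_mk hz) 1)).and (negl_of_isRep_zero hcr 1)).and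
    (g.evs_pos_le (by norm_num : (0 : ℝ) < 1 / 4))).mono
    fun ε _ _ ⟨⟨⟨hrad, hzr⟩, hcr⟩, hρ, hρ4⟩ => (ENNReal.ofReal_le_ofReal ?_).trans hrad⟩
  have hzε : ‖z ε‖ = (g.ρ ε)⁻¹ * (g.ρ ε ^ N)⁻¹ := by simp [z, abs_of_pos hρ, pow_succ, mul_comm]
  have htri : ‖z ε‖ ≤ ‖zr ε - cr ε‖ + ‖zr ε - z ε‖ + ‖cr ε‖ := by
    calc ‖z ε‖ = ‖(zr ε - cr ε) - (zr ε - z ε) + cr ε‖ := by ring_nf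
      _ ≤ _ := (norm_add_le _ _).trans (by gcongr; exact norm_sub_le _ _)
  have hN1 : 1 ≤ (g.ρ ε ^ N)⁻¹ :=
    (one_le_inv₀ (by positivity)).2 (pow_le_one₀ hρ.le (by linarith))
  have hρinv : 4 ≤ (g.ρ ε)⁻¹ := by rw [le_inv_comm₀ (by norm_num) hρ]; linarith
  rw [pow_one] at hzr hcr
  nlinarith [pow_pos hρ m]

theorem summable_of_convSet_eq_univ {g : Gauge} {A : ℕ → ℝ → ℂ}
    (hcs : convSet g A (GQ.zero g ℂ) = Set.univ) (N : ℕ) :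
    EvS fun ε => Summable fun n => ‖A n ε‖ * (g.ρ ε ^ N)⁻¹ ^ n := by
  obtain ⟨a, hA, hrad⟩ := exists_strEquiv_ofReal_le_radNet hcs (N + 2)
  refine (((hrad.and (hA (N + 1) 0)).and (g.evs_inv_pow_lt (N + 1))).and
    (g.evs_pos_le (by norm_num : (0 : ℝ) < 1 / 2))).mono
    fun ε _ _ ⟨⟨⟨hrad, hA⟩, hlt⟩, hρ, hρ2⟩ => ?_
  refine Summable.of_norm_bounded_eventually_nat
    ((summable_geometric_of_lt_one hρ.le (by linarith)).mul_left 2) ?_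
  filter_upwards [eventually_norm_le_inv_pow_of_ofReal_le_radNet (by positivity) hlt hrad]
    with n hn
  rw [inv_inv] at hn
  have hAn : ‖A n ε‖ ≤ 2 * (g.ρ ε ^ (N + 1)) ^ n := by
    have := hA n
    rw [add_zero, pow_mul'] at this
    calc ‖A n ε‖ ≤ ‖A n ε - a n ε‖ + ‖a n ε‖ := norm_le_norm_sub_add _ _
      _ ≤ _ := by linarith
  rw [Real.norm_of_nonneg (by positivity)]
  calc ‖A n ε‖ * (g.ρ ε ^ N)⁻¹ ^ n ≤ 2 * (g.ρ ε ^ (N + 1)) ^ n * (g.ρ ε ^ N)⁻¹ ^ n := by gcongr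
    _ = 2 * g.ρ ε ^ n := by
        rw [mul_assoc, ← mul_pow, pow_succ, mul_comm (g.ρ ε ^ N), mul_inv_cancel_right₀
          (by positivity)]

namespace Gauge.StrEquiv

variable {g : Gauge} {a b : ℕ → ℝ → ℂ}

theorem evs_norm_sub_mul_le (h : g.StrEquiv a b) (K q : ℕ) :
    EvS fun ε => ∀ n, ‖a n ε - b n ε‖ * (g.ρ ε ^ K)⁻¹ ^ n ≤ g.ρ ε ^ q * g.ρ ε ^ n := by
  refine (h (K + 1) q).mono fun ε hε hε1 h n => ?_
  have hρ := g.pos ε hε hε1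
  calc ‖a n ε - b n ε‖ * (g.ρ ε ^ K)⁻¹ ^ n
      ≤ g.ρ ε ^ (n * (K + 1) + q) * (g.ρ ε ^ K)⁻¹ ^ n := by gcongr; exact h n
    _ = g.ρ ε ^ q * g.ρ ε ^ n := by
        rw [pow_add, pow_mul', pow_succ, mul_pow, inv_pow]
        field_simp

variable {K : ℕ} {v : ℝ → ℂ}

theorem evs_norm_sum_range_sub_le (h : g.StrEquiv a b)
    (hv : EvS fun ε => ‖v ε‖ ≤ (g.ρ ε ^ K)⁻¹) (q : ℕ) :
    EvS fun ε => ∀ N : ℕ,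
      ‖∑ n ∈ Finset.range (N + 1), (a n ε * v ε ^ n - b n ε * v ε ^ n)‖ ≤ g.ρ ε ^ q := by
  refine (((h.evs_norm_sub_mul_le K (q + 1)).and hv).and
    (g.evs_pos_le (by norm_num : (0 : ℝ) < 1 / 2))).mono fun ε _ _ ⟨⟨h, hv⟩, hρ, hρ2⟩ N => ?_
  refine (norm_sum_range_le_of_le_geometric (δ := g.ρ ε ^ (q + 1)) hρ.le hρ2 (fun n => ?_) _).trans
    ?_
  · rw [← sub_mul, norm_mul, norm_pow]
    exact (by gcongr : ‖a n ε - b n ε‖ * ‖v ε‖ ^ n ≤ _ * (g.ρ ε ^ K)⁻¹ ^ n).trans (h n)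
  · rw [pow_succ']
    nlinarith [pow_pos hρ q]

theorem negl_tsum_sub (h : g.StrEquiv a b) (hv : EvS fun ε => ‖v ε‖ ≤ (g.ρ ε ^ K)⁻¹)
    (ha : EvS fun ε => Summable fun n => a n ε * v ε ^ n)
    (hb : EvS fun ε => Summable fun n => b n ε * v ε ^ n) :
    g.Negl fun ε => ∑' n, a n ε * v ε ^ n - ∑' n, b n ε * v ε ^ n := by
  intro q
  refine (((((h.evs_norm_sub_mul_le K (q + 1)).and hv).and ha).and hb).and
    (g.evs_pos_le (by norm_num : (0 : ℝ) < 1 / 2))).mono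
    fun ε _ _ ⟨⟨⟨⟨h, hv⟩, ha⟩, hb⟩, hρ, hρ2⟩ => ?_
  dsimp only
  rw [← ha.tsum_sub hb]
  refine (tsum_of_norm_bounded ((summable_geometric_of_lt_one hρ.le (by linarith)).hasSum.mul_left
    (g.ρ ε ^ (q + 1))) fun n => ?_).trans ?_
  · rw [← sub_mul, norm_mul, norm_pow]
    exact (by gcongr : ‖a n ε - b n ε‖ * ‖v ε‖ ^ n ≤ _ * (g.ρ ε ^ K)⁻¹ ^ n).trans (h n)
  · rw [pow_succ']
    nlinarith [mul_le_mul_of_nonneg_left (tsum_geometric_le_two hρ.le hρ2)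
      (by positivity : 0 ≤ g.ρ ε * g.ρ ε ^ q), pow_pos hρ q]

theorem negl_tsum_deriv_sub (h : g.StrEquiv a b) (hv : EvS fun ε => ‖v ε‖ ≤ (g.ρ ε ^ K)⁻¹)
    (ha : EvS fun ε => Summable fun n : ℕ => (n : ℂ) * a n ε * v ε ^ (n - 1))
    (hb : EvS fun ε => Summable fun n : ℕ => (n : ℂ) * b n ε * v ε ^ (n - 1)) :
    g.Negl fun ε => ∑' n : ℕ, (n : ℂ) * a n ε * v ε ^ (n - 1)
      - ∑' n : ℕ, (n : ℂ) * b n ε * v ε ^ (n - 1) := by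
  intro q
  refine (((((h.evs_norm_sub_mul_le K (q + 1)).and hv).and ha).and hb).and
    (g.evs_pos_le (by norm_num : (0 : ℝ) < 1 / 2))).mono
    fun ε hε hε1 ⟨⟨⟨⟨h, hv⟩, ha⟩, hb⟩, hρ, hρ2⟩ => ?_
  dsimp only
  rw [← ha.tsum_sub hb]
  have hK1 : 1 ≤ (g.ρ ε ^ K)⁻¹ :=
    (one_le_inv₀ (by positivity)).2 (pow_le_one₀ hρ.le (by linarith))
  refine (tsum_of_norm_bounded ((hasSum_coe_mul_geometric_of_norm_lt_one
    (by rw [Real.norm_of_nonneg hρ.le]; linarith)).mul_left (g.ρ ε ^ (q + 1))) fun n => ?_).trans ?_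
  · rw [← sub_mul, ← mul_sub, norm_mul, norm_mul, norm_pow, Complex.norm_natCast]
    calc (n : ℝ) * ‖a n ε - b n ε‖ * ‖v ε‖ ^ (n - 1)
        ≤ n * (‖a n ε - b n ε‖ * (g.ρ ε ^ K)⁻¹ ^ n) := by
          rw [mul_assoc]
          gcongr
          exact (pow_le_pow_left₀ (norm_nonneg _) hv _).trans (pow_le_pow_right₀ hK1 (by omega))
      _ ≤ n * (g.ρ ε ^ (q + 1) * g.ρ ε ^ n) := mul_le_mul_of_nonneg_left (h n) n.cast_nonneg
      _ = g.ρ ε ^ (q + 1) * (n * g.ρ ε ^ n) := by ring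
  · rw [← tsum_coe_mul_geometric_of_norm_lt_one (by rw [Real.norm_of_nonneg hρ.le]; linarith),
      pow_succ']
    nlinarith [mul_le_mul_of_nonneg_left (tsum_natCast_mul_geometric_le_two hρ.le hρ2)
      (by positivity : 0 ≤ g.ρ ε * g.ρ ε ^ q), pow_pos hρ q]

end Gauge.StrEquiv

theorem negl_tsum_mul_pow_sub {g : Gauge} {A : ℕ → ℝ → ℂ} {K : ℕ}
    (hA : EvS fun ε => Summable fun n => ‖A n ε‖ * (g.ρ ε ^ (K + 1))⁻¹ ^ n)
    {t v : ℝ → ℂ} (ht : EvS fun ε => ‖t ε‖ ≤ (g.ρ ε ^ K)⁻¹)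
    (hv : EvS fun ε => ‖v ε‖ ≤ (g.ρ ε ^ K)⁻¹) (htv : g.Negl fun ε => t ε - v ε)
    (hderiv : ∀ τ : ℝ → ℂ, (g.Negl fun ε => τ ε - v ε) → (EvS fun ε => ‖τ ε‖ ≤ (g.ρ ε ^ K)⁻¹) →
      g.Mod fun ε => ∑' n : ℕ, (n : ℂ) * A n ε * τ ε ^ (n - 1)) :
    g.Negl fun ε => ∑' n, A n ε * t ε ^ n - ∑' n, A n ε * v ε ^ n := by
  obtain ⟨τ, hτ⟩ := EvS.exists_net ((((hA.and ht).and hv).and (g.evs_inv_pow_lt K)).mono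
    fun ε _ _ ⟨⟨⟨hA, ht⟩, hv⟩, hball⟩ => exists_mem_segment_norm_tsum_mul_pow_sub_le hA
      (mem_ball_zero_iff.2 (hv.trans_lt hball)) (mem_ball_zero_iff.2 (ht.trans_lt hball)))
  have hτv : EvS fun ε => ‖τ ε - v ε‖ ≤ ‖t ε - v ε‖ := hτ.mono fun ε _ _ ⟨hseg, _⟩ => by
    simpa [dist_eq_norm] using (convex_closedBall (v ε) ‖t ε - v ε‖).segment_subset
      (Metric.mem_closedBall_self (norm_nonneg _)) (by simp [dist_eq_norm]) hseg
  have hτK : EvS fun ε => ‖τ ε‖ ≤ (g.ρ ε ^ K)⁻¹ := ((hτ.and ht).and hv).mono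
    fun ε _ _ ⟨⟨⟨hseg, _⟩, ht⟩, hv⟩ => by
      simpa using (convex_closedBall (0 : ℂ) _).segment_subset (mem_closedBall_zero_iff.2 hv)
        (mem_closedBall_zero_iff.2 ht) hseg
  exact (htv.mul_mod (hderiv τ (htv.of_evs_norm_le hτv) hτK)).of_evs_norm_le
    (hτ.mono fun ε _ _ ⟨_, h⟩ => by rw [norm_mul, mul_comm]; exact h)

def HasHyperPowerSeries (g : Gauge) (F : Ct g → Ct g) (A : ℕ → ℝ → ℂ) : Prop :=
  ∀ z : Ct g, ∀ zr : ℝ → ℂ, IsRep g zr z →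
    ∃ hS : g.SMod fun n ε => A n ε * zr ε ^ n, HSConv g (fun n ε => A n ε * zr ε ^ n) hS (F z)

section HyperPowerSeries

variable {g : Gauge} {A : ℕ → ℝ → ℂ} {F : Ct g → Ct g}

theorem isRep_tsum_of_convSet_eq_univ (hcs : convSet g A (GQ.zero g ℂ) = Set.univ)
    (hF : HasHyperPowerSeries g F A)
    {u : Ct g} {t : ℝ → ℂ} (ht : IsRep g t u) :
    IsRep g (fun ε => ∑' n, A n ε * t ε ^ n) (F u) := by
  obtain ⟨-, zr, cr, a, hzr, hcr, -, hAa, hS, hsum, ⟨hm, hlim⟩, hderiv⟩ :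
      u ∈ convSet g A (GQ.zero g ℂ) := hcs ▸ trivial
  set v : ℝ → ℂ := fun ε => zr ε - cr ε
  have hv : IsRep g v u := hzr.of_negl_sub (by simpa [v] using (negl_of_isRep_zero hcr).neg)
  obtain ⟨K, hK⟩ : ∃ K : ℕ, EvS fun ε => ‖t ε‖ ≤ (g.ρ ε ^ K)⁻¹ ∧ ‖v ε‖ ≤ (g.ρ ε ^ K)⁻¹ := by
    obtain ⟨K₁, h₁⟩ := ht.mod
    obtain ⟨K₂, h₂⟩ := hv.mod
    refine ⟨K₁ + K₂, (h₁.and h₂).mono fun ε hε hε1 ⟨h₁, h₂⟩ => ?_⟩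
    simp only [← zpow_natCast, ← zpow_neg]
    exact ⟨h₁.trans (g.zpow_neg_le hε hε1 (by omega)), h₂.trans (g.zpow_neg_le hε hε1 (by omega))⟩
  have htK := hK.mono fun _ _ _ h => h.1
  have hvK := hK.mono fun _ _ _ h => h.2
  have hFu : IsRep g (fun ε => ∑' n, PSeriesNet a zr cr n ε) (F u) := by
    obtain ⟨_, hconv⟩ := hF u v hv
    exact ⟨hm, (HSConv.congr hS hconv (hAa.evs_norm_sum_range_sub_le hvK)).unique hlim |>.symm⟩
  have hsumAv : EvS fun ε => Summable fun n => A n ε * v ε ^ n :=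
    ((summable_of_convSet_eq_univ hcs K).and hvK).mono fun ε _ _ ⟨hs, hv⟩ =>
      Summable.of_norm_bounded hs fun n => by rw [norm_mul, norm_pow]; gcongr
  have hsumA := summable_of_convSet_eq_univ hcs (K + 1)
  refine hFu.of_negl_sub ((negl_tsum_mul_pow_sub hsumA htK hvK (ht.negl_sub hv)
    fun τ hτ hτK => ?_).triangle (hAa.negl_tsum_sub hvK hsumAv hsum))
  -- a net `τ` with `τ - v` negligible is again a representative, so (iv) applies at it
  have hτrep : IsRep g (fun ε => τ ε + cr ε) u :=
    hzr.of_negl_sub (by convert hτ using 2; simp only [v]; ring)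
  obtain ⟨hsa, hma⟩ := hderiv _ hτrep
  simp only [add_sub_cancel_right] at hsa hma
  have hsumA' : EvS fun ε => Summable fun n : ℕ => (n : ℂ) * A n ε * τ ε ^ (n - 1) :=
    ((hsumA.and hτK).and (g.evs_inv_pow_lt K)).mono fun ε _ _ ⟨⟨hs, hτ⟩, hlt⟩ =>
      (hasSum_deriv_tsum_mul_pow hs (mem_ball_zero_iff.2 (hτ.trans_lt hlt))).summable
  simpa using ((hAa.negl_tsum_deriv_sub hτK hsumA' hsa).mod.add hma)

theorem rapidDecay_of_convSet_eq_univ (hcs : convSet g A (GQ.zero g ℂ) = Set.univ)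
    (hF : HasHyperPowerSeries g F A)
    (hbdd : ∃ M : Rt g, ∀ z : Ct g, GQ.absLt g (F z) (GQ.zero g ℂ) M) : g.RapidDecay A := by
  obtain ⟨M, hM⟩ := hbdd
  obtain ⟨R, hR⟩ := exists_evs_norm_le_of_absLt_zero M
  refine ⟨R, fun N => ?_⟩
  have hsum := (summable_of_convSet_eq_univ hcs (N + 1)).and (g.evs_inv_pow_lt N)
  obtain ⟨t, ht⟩ := EvS.exists_net (hsum.mono fun ε hε hε1 ⟨hs, hlt⟩ =>
    exists_isMaxOn_sphere_norm_tsum_mul_pow hs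
      (inv_nonneg.2 (pow_nonneg (g.pos ε hε hε1).le N)) hlt)
  have htmod : g.Mod t := Gauge.mod_iff_evs_norm_le_inv_pow.2
    ⟨N, ht.mono fun ε _ _ ⟨ht, _⟩ => (mem_sphere_zero_iff_norm.1 ht).le⟩
  refine (((hR _ (hM _) _ (isRep_tsum_of_convSet_eq_univ hcs hF (isRep_mk htmod))).and ht).and
    hsum).mono fun ε hε hε1 ⟨⟨hbd, _, hmax⟩, hs, hlt⟩ n => ?_
  have := norm_le_div_pow_of_norm_tsum_mul_pow_le hs
    (inv_pos.2 (pow_pos (g.pos ε hε hε1) N)) hlt (fun w hw => (hmax hw).trans hbd) n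
  rwa [inv_pow, div_inv_eq_mul] at this

theorem eq_mk_of_convSet_eq_univ (hcs : convSet g A (GQ.zero g ℂ) = Set.univ)
    (hF : HasHyperPowerSeries g F A)
    (hbdd : ∃ M : Rt g, ∀ z : Ct g, GQ.absLt g (F z) (GQ.zero g ℂ) M) (z : Ct g) :
    F z = GQ.mk g (A 0) (rapidDecay_of_convSet_eq_univ hcs hF hbdd).mod_apply_zero := by
  have hA := rapidDecay_of_convSet_eq_univ hcs hF hbdd
  obtain ⟨hS, hconv⟩ := hF z _ (isRep_out z)
  exact hconv.unique ((hA.mul_pow (isRep_out z).mod).hsConv hS _ fun ε => by simp)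

end HyperPowerSeries

theorem stmt15_general (g : Gauge) (f : ℝ → ℂ → ℂ) (hent : ∀ ε : ℝ, Differentiable ℂ (f ε))
    (Mr : ℝ → ℝ) (hMmod : g.Mod Mr)
    (hbound : ∀ N : ℕ, EvS fun ε => ∀ w : ℂ, ‖w‖ ≤ g.ρ ε ^ (-(N : ℤ)) → ‖f ε w‖ ≤ Mr ε)
    (A : ℕ → ℝ → ℂ) (hAdef : A = fun n ε => iteratedDeriv n (f ε) 0 / (n.factorial : ℂ)) :
    (g.WMod A ∧
      (∀ Nr : ℝ → ℕ, g.NMod Nr → (EvS fun ε => 1 ≤ Nr ε) → g.Negl fun ε => A (Nr ε) ε) ∧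
      ∀ z ∈ convSet g A (GQ.zero g ℂ), ∀ zr : ℝ → ℂ, IsRep g zr z →
        ∃ hS : g.SMod fun n ε => A n ε * zr ε ^ n, ∃ h0 : g.Mod fun ε => f ε 0,
          HSConv g (fun n ε => A n ε * zr ε ^ n) hS (GQ.mk g _ h0)) ∧
    ∀ A' : ℕ → ℝ → ℂ, g.WMod A' → ∀ F : Ct g → Ct g,
      convSet g A' (GQ.zero g ℂ) = Set.univ →
      (∀ z : Ct g, ∀ zr : ℝ → ℂ, IsRep g zr z →
        ∃ hS : g.SMod fun n ε => A' n ε * zr ε ^ n,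
          HSConv g (fun n ε => A' n ε * zr ε ^ n) hS (F z)) →
      (∃ M : Rt g, ∀ z : Ct g, GQ.absLt g (F z) (GQ.zero g ℂ) M) →
      ∀ z w : Ct g, F z = F w := by
  have hA : g.RapidDecay A := hAdef ▸ rapidDecay_iteratedDeriv_div_factorial hent hMmod hbound
  have hA0 : ∀ ε, A 0 ε = f ε 0 := by simp [hAdef]
  refine ⟨⟨hA.wmod, fun _ _ hN => hA.negl_apply_of_one_le hN, fun z _ zr hzr => ?_⟩,
    fun _ _ F hcs hF hbdd z w => ?_⟩
  · have hAz := hA.mul_pow hzr.mod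
    have h0 : g.Mod fun ε => f ε 0 := funext hA0 ▸ hA.mod_apply_zero
    exact ⟨hAz.smod, h0, hAz.hsConv hAz.smod h0 fun ε => by simp [hA0]⟩
  · rw [eq_mk_of_convSet_eq_univ hcs hF hbdd z, eq_mk_of_convSet_eq_univ hcs hF hbdd w]

/-- Liouville-type theorem: a uniformly bounded net of entire functions has
negligible Taylor coefficients of positive index, its hyper-power series is the constant
[f_ε(0)], and a bounded generalized entire function is constant. -/
theorem stmt15 (g : Gauge) (f : ℝ → ℂ → ℂ) (hent : ∀ ε : ℝ, Differentiable ℂ (f ε))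
    (Mr : ℝ → ℝ) (hMmod : g.Mod Mr) (hMpos : Rt.lt g (GQ.zero g ℝ) (GQ.mk g Mr hMmod))
    (hbound : ∀ N : ℕ, EvS fun ε => ∀ w : ℂ, ‖w‖ ≤ g.ρ ε ^ (-(N : ℤ)) → ‖f ε w‖ ≤ Mr ε)
    (A : ℕ → ℝ → ℂ) (hAdef : A = fun n ε => iteratedDeriv n (f ε) 0 / (n.factorial : ℂ)) :
    (g.WMod A ∧
      (∀ Nr : ℝ → ℕ, g.NMod Nr → (EvS fun ε => 1 ≤ Nr ε) → g.Negl fun ε => A (Nr ε) ε) ∧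
      ∀ z ∈ convSet g A (GQ.zero g ℂ), ∀ zr : ℝ → ℂ, IsRep g zr z →
        ∃ hS : g.SMod fun n ε => A n ε * zr ε ^ n, ∃ h0 : g.Mod fun ε => f ε 0,
          HSConv g (fun n ε => A n ε * zr ε ^ n) hS (GQ.mk g _ h0)) ∧
    ∀ A' : ℕ → ℝ → ℂ, g.WMod A' → ∀ F : Ct g → Ct g,
      convSet g A' (GQ.zero g ℂ) = Set.univ →
      (∀ z : Ct g, ∀ zr : ℝ → ℂ, IsRep g zr z →
        ∃ hS : g.SMod fun n ε => A' n ε * zr ε ^ n,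
          HSConv g (fun n ε => A' n ε * zr ε ^ n) hS (F z)) →
      (∃ M : Rt g, ∀ z : Ct g, GQ.absLt g (F z) (GQ.zero g ℂ) M) →
      ∀ z w : Ct g, F z = F w :=
  stmt15_general g f hent Mr hMmod hbound A hAdef
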